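/- Let $Y_0, Y_1, \dots, Y_{[J/2]}$ be i.i.d. real random variables with mean zero, $|Y_j| \leq M$ almost surely, and $E[Y_j^2] \leq 2 b^2$ where $b > 0$. Let $n, q, k \in \mathbb{N}$ with $J+1 = n/q \geq 1$, and suppose $M \leq 2\sqrt{q}\,\frac{\sqrt{n}}{q\sqrt{2^k}} b$. Then for every $u \geq 1$, $P\left( \sqrt{\tfrac{q}{n}} \sum_{j=0}^{[J/2]} Y_j \geq u^2\, 2^{k/2}\, b\, \tfrac{16}{3} \right) \leq \exp\left( -u^2 2^k \right)$. -/

import Mathlib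

/-!
Chernoff's method with a single, explicit exponent. Since `exp x ≤ 1 + x + x²` for `|x| ≤ 1`,
a centred variable with `|Y| ≤ M` and `E[Y²] ≤ v` has `E[exp (t Y)] ≤ exp (t² v)` whenever
`0 ≤ t` and `t M ≤ 1`; independence multiplies these bounds over the `⌊J/2⌋ + 1 ≤ n/q` summands.
The hypothesis on `M` is exactly what makes `t = 2^{k/2} √(q/n) / (2b)` admissible, and for this
`t` the Chernoff exponent is `-(8/3) u² 2^k + 2^k / 2 ≤ -u² 2^k` because `u ≥ 1`.
-/

open MeasureTheory ProbabilityTheory Real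

lemma Real.rpow_natCast_div_two_sq {x : ℝ} (hx : 0 ≤ x) (k : ℕ) :
    (x ^ ((k : ℝ) / 2)) ^ 2 = x ^ k := by
  rw [← rpow_mul_natCast hx, ← rpow_natCast x k]
  push_cast
  ring_nf

lemma chernoff_exponent_le {K r b u N : ℝ} (hr : 0 < r) (hb : 0 < b) (hu : 1 ≤ u)
    (hN : N * r ^ 2 ≤ 1) :
    -(K * r / (2 * b)) * (u ^ 2 * K * b * (16 / 3) / r) + N * ((K * r / (2 * b)) ^ 2 * (2 * b ^ 2))
      ≤ -(u ^ 2 * K ^ 2) := by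
  have hlin : -(K * r / (2 * b)) * (u ^ 2 * K * b * (16 / 3) / r) = -(8 / 3) * u ^ 2 * K ^ 2 := by
    field_simp; ring
  have hquad : N * ((K * r / (2 * b)) ^ 2 * (2 * b ^ 2)) = K ^ 2 / 2 * (N * r ^ 2) := by
    field_simp
  rw [hlin, hquad]
  have hu2 : 1 ≤ u ^ 2 := one_le_pow₀ hu
  nlinarith [mul_le_mul_of_nonneg_left hN (by positivity : 0 ≤ K ^ 2 / 2), sq_nonneg K]

namespace ProbabilityTheory

variable {Ω : Type*} [MeasurableSpace Ω] {P : Measure Ω} [IsProbabilityMeasure P]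

lemma mgf_le_exp_mul_sq_of_abs_le {X : Ω → ℝ} (hX : AEMeasurable X P) {M v t : ℝ}
    (hmean : ∫ ω, X ω ∂P = 0) (hbound : ∀ᵐ ω ∂P, |X ω| ≤ M)
    (hvar : ∫ ω, X ω ^ 2 ∂P ≤ v) (ht : 0 ≤ t) (htM : t * M ≤ 1) :
    mgf X P t ≤ exp (t ^ 2 * v) := by
  have hmemLp : MemLp X 2 P := MemLp.of_bound hX.aestronglyMeasurable M (by simpa using hbound)
  have hXint : Integrable X P := hmemLp.integrable one_le_two
  have hX2int : Integrable (fun ω => X ω ^ 2) P := hmemLp.integrable_sq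
  have hlinint : Integrable (fun ω => 1 + t * X ω) P := (integrable_const 1).add (hXint.const_mul t)
  have hquad : ∀ᵐ ω ∂P, exp (t * X ω) ≤ 1 + t * X ω + t ^ 2 * X ω ^ 2 := by
    filter_upwards [hbound] with ω hω
    have htX : |t * X ω| ≤ 1 := by
      rw [abs_mul, abs_of_nonneg ht]
      nlinarith [abs_nonneg (X ω)]
    have := (abs_le.1 (abs_exp_sub_one_sub_id_le htX)).2
    linarith [mul_pow t (X ω) 2]
  calc mgf X P t ≤ ∫ ω, (1 + t * X ω + t ^ 2 * X ω ^ 2) ∂P :=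
        integral_mono_ae (integrable_exp_mul_of_le t M ht hX
          (hbound.mono fun _ h => (le_abs_self _).trans h))
          (hlinint.add (hX2int.const_mul _)) hquad
    _ = 1 + t ^ 2 * ∫ ω, X ω ^ 2 ∂P := by
        rw [integral_add hlinint (hX2int.const_mul _),
          integral_add (integrable_const 1) (hXint.const_mul t), integral_const_mul,
          integral_const_mul, hmean]
        simp
    _ ≤ 1 + t ^ 2 * v := by gcongr
    _ ≤ exp (t ^ 2 * v) := by linarith [add_one_le_exp (t ^ 2 * v)]

lemma measureReal_sum_ge_le_of_abs_le {ι : Type*} [Fintype ι] {X : ι → Ω → ℝ}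
    (hmeas : ∀ i, Measurable (X i)) (hindep : iIndepFun X P) {M v t : ℝ}
    (hmean : ∀ i, ∫ ω, X i ω ∂P = 0) (hbound : ∀ i, ∀ᵐ ω ∂P, |X i ω| ≤ M)
    (hvar : ∀ i, ∫ ω, X i ω ^ 2 ∂P ≤ v) (ht : 0 ≤ t) (htM : t * M ≤ 1) (ε : ℝ) :
    P.real {ω | ε ≤ ∑ i, X i ω} ≤ exp (-t * ε + Fintype.card ι * (t ^ 2 * v)) := by
  have hint : ∀ i ∈ Finset.univ, Integrable (fun ω => exp (t * X i ω)) P := fun i _ =>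
    integrable_exp_mul_of_le t M ht (hmeas i).aemeasurable
      ((hbound i).mono fun _ h => (le_abs_self _).trans h)
  calc P.real {ω | ε ≤ ∑ i, X i ω} = P.real {ω | ε ≤ (∑ i, X i) ω} := by
        simp only [Finset.sum_apply]
    _ ≤ exp (-t * ε) * mgf (∑ i, X i) P t :=
        measure_ge_le_exp_mul_mgf ε ht (hindep.integrable_exp_mul_sum hmeas hint)
    _ = exp (-t * ε) * ∏ i, mgf (X i) P t := by rw [hindep.mgf_sum hmeas]
    _ ≤ exp (-t * ε) * ∏ _i : ι, exp (t ^ 2 * v) := by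
        gcongr with i
        · exact fun _ _ => mgf_nonneg
        · exact mgf_le_exp_mul_sq_of_abs_le (hmeas i).aemeasurable (hmean i) (hbound i)
            (hvar i) ht htM
    _ = exp (-t * ε + Fintype.card ι * (t ^ 2 * v)) := by
        rw [Finset.prod_const, Finset.card_univ, ← exp_nat_mul, ← exp_add]

end ProbabilityTheory

theorem stmt_9_general {Ω : Type*} [MeasurableSpace Ω] (P : Measure Ω) [IsProbabilityMeasure P]
    (n q k J : ℕ) (hq : 0 < q) (hnq : n = (J + 1) * q)
    (Y : Fin (J / 2 + 1) → Ω → ℝ) (hmeas : ∀ j, Measurable (Y j))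
    (hindep : iIndepFun Y P)
    (M b : ℝ) (hb : 0 < b)
    (hmean : ∀ j, ∫ ω, Y j ω ∂P = 0)
    (hbound : ∀ j, ∀ᵐ ω ∂P, |Y j ω| ≤ M)
    (hvar : ∀ j, ∫ ω, (Y j ω) ^ 2 ∂P ≤ 2 * b ^ 2)
    (hM : M ≤ 2 * Real.sqrt q * (Real.sqrt n / (q * Real.sqrt (2 ^ k))) * b) :
    ∀ u : ℝ, 1 ≤ u →
      (P {ω | u ^ 2 * (2:ℝ) ^ ((k : ℝ) / 2) * b * (16 / 3) ≤
          Real.sqrt ((q : ℝ) / n) * ∑ j, Y j ω}).toReal ≤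
        Real.exp (-(u ^ 2 * 2 ^ k)) := by
  intro u hu
  set K : ℝ := (2:ℝ) ^ ((k : ℝ) / 2)
  set r : ℝ := √((q : ℝ) / n) with hr
  have hq' : (0:ℝ) < q := by exact_mod_cast hq
  have hn : (n:ℝ) = (J + 1) * q := by exact_mod_cast hnq
  have hK0 : 0 < K := by positivity
  have hK2 : K ^ 2 = 2 ^ k := rpow_natCast_div_two_sq zero_le_two k
  have hr0 : 0 < r := sqrt_pos.2 (by rw [hn]; positivity)
  have hNr : (Fintype.card (Fin (J / 2 + 1)) : ℝ) * r ^ 2 ≤ 1 := calc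
    _ ≤ (J + 1) * r ^ 2 := by
      gcongr
      rw [Fintype.card_fin]; exact_mod_cast Nat.succ_le_succ (Nat.div_le_self J 2)
    _ = 1 := by
      rw [hr, sq_sqrt (by positivity), hn]
      field_simp
  have hMKr : M * (K * r) ≤ 2 * b := calc
    M * (K * r) ≤ 2 * √q * (√n / (q * √(2 ^ k))) * b * (K * r) := by gcongr
    _ = 2 * b := by
      have hsn : 0 < √(n : ℝ) := sqrt_pos.2 (by rw [hn]; positivity)
      rw [← hK2, sqrt_sq hK0.le, hr, sqrt_div' _ (Nat.cast_nonneg n)]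
      field_simp
      rw [sq_sqrt hq'.le]
  have hevent : {ω | u ^ 2 * K * b * (16 / 3) ≤ r * ∑ j, Y j ω}
      = {ω | u ^ 2 * K * b * (16 / 3) / r ≤ ∑ j, Y j ω} := by
    ext ω
    simp only [Set.mem_ofPred_eq, div_le_iff₀' hr0]
  rw [← measureReal_def, hevent, ← hK2]
  refine (measureReal_sum_ge_le_of_abs_le hmeas hindep hmean hbound hvar
    (t := K * r / (2 * b)) (by positivity)
    (by rw [div_mul_eq_mul_div, div_le_one (by positivity)]; linarith) _).trans ?_
  exact exp_le_exp.2 (chernoff_exponent_le hr0 hb hu hNr)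

/-- Single-block Bernstein-type bound: for i.i.d. mean-zero `Y_0,…,Y_{⌊J/2⌋}` bounded by `M`
with second moment at most `2b²`, where `n = (J+1)q` and
`M ≤ 2√q · (√n / (q √(2^k))) · b`, one has for every `u ≥ 1`
`P(√(q/n) ∑_j Y_j ≥ u² 2^{k/2} b · 16/3) ≤ exp(-u² 2^k)`. -/
theorem stmt_9 {Ω : Type*} [MeasurableSpace Ω] (P : Measure Ω) [IsProbabilityMeasure P]
    (n q k J : ℕ) (hq : 0 < q) (hnq : n = (J + 1) * q)
    (Y : Fin (J / 2 + 1) → Ω → ℝ) (hmeas : ∀ j, Measurable (Y j))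
    (hindep : iIndepFun Y P)
    (hident : ∀ j, Measure.map (Y j) P = Measure.map (Y 0) P)
    (M b : ℝ) (hb : 0 < b)
    (hmean : ∀ j, ∫ ω, Y j ω ∂P = 0)
    (hbound : ∀ j, ∀ᵐ ω ∂P, |Y j ω| ≤ M)
    (hvar : ∀ j, ∫ ω, (Y j ω) ^ 2 ∂P ≤ 2 * b ^ 2)
    (hM : M ≤ 2 * Real.sqrt q * (Real.sqrt n / (q * Real.sqrt (2 ^ k))) * b) :
    ∀ u : ℝ, 1 ≤ u →
      (P {ω | u ^ 2 * (2:ℝ) ^ ((k : ℝ) / 2) * b * (16 / 3) ≤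
          Real.sqrt ((q : ℝ) / n) * ∑ j, Y j ω}).toReal ≤
        Real.exp (-(u ^ 2 * 2 ^ k)) :=
  stmt_9_general P n q k J hq hnq Y hmeas hindep M b hb hmean hbound hvar hM
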